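/- Let a, b, c, d be nonnegative integers with b, d positive, gcd(a,b) = 1, gcd(c,d) = 1, and bc − ad = 2^m · 3^n for some nonnegative integers m, n. Then (i) every rational number x with a/b ≤ x ≤ c/d appears in the tree T(a/b, c/d), and (ii) there exists L such that for all rows with index at least L, every pair of consecutive entries p, q of S(n)(a/b, c/d) has cross-determinant 1, i.e. den(p)·num(q) − num(p)·den(q) = 1. -/

import Mathlib

def mediant (p q : ℚ) : ℚ := ((p.num + q.num : ℤ) : ℚ) / ((p.den + q.den : ℕ) : ℚ)

def insertMediants : List ℚ → List ℚ
  | [] => []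
  | [p] => [p]
  | p :: q :: rest => p :: mediant p q :: insertMediants (q :: rest)

def S (r s : ℚ) : ℕ → List ℚ
  | 0 => [r, s]
  | n + 1 => insertMediants (S r s n)

/-!
Let `t` be the factor cancelled when the mediant `(num p + num q) / (den p + den q)` is reduced;
the two new pairs then have cross-determinant `D / t`, where `D` is that of `(p, q)`. Reducing the
primitive vectors `(num, den)` modulo 2 and 3 shows: if `2 ∣ D` then `2 ∣ t`, and if `3 ∣ D` but
`t = 1` then both new pairs have a scale divisible by `3`. So for `{2,3}`-smooth `D` the potential
`2 D + [t = 1]` drops by one per row until `D = 1`. From then on the tree behaves like the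
Stern–Brocot tree: a rational strictly between neighbours `u < v` with cross-determinant `1` has
denominator at least `den u + den v`, while the denominators of the neighbours enclosing `x` grow
with every row, so `x` eventually appears.
-/

def crossDet (p q : ℚ) : ℤ := p.den * q.num - p.num * q.den

/-- The common factor cancelled when `(num p + num q) / (den p + den q)` is put in lowest terms. -/
def mediantScale (p q : ℚ) : ℕ := (p.den + q.den).gcd (p.num + q.num).natAbs

section Mediant

variable (p q : ℚ)

lemma mediantScale_pos : 0 < mediantScale p q :=
  Nat.gcd_pos_of_pos_left _ (by positivity)

lemma mediant_eq_mkRat : mediant p q = mkRat (p.num + q.num) (p.den + q.den) := by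
  rw [Rat.mkRat_eq_div, mediant]

lemma mediantScale_mul_num : (mediantScale p q : ℤ) * (mediant p q).num = p.num + q.num := by
  rw [mediant_eq_mkRat, Rat.num_mkRat, if_neg (by positivity)]
  exact Int.mul_ediv_cancel' (Int.natCast_dvd.2 (Nat.gcd_dvd_right _ _))

lemma mediantScale_mul_den : mediantScale p q * (mediant p q).den = p.den + q.den := by
  rw [mediant_eq_mkRat, Rat.den_mkRat, if_neg (by positivity)]
  exact Nat.mul_div_cancel' (Nat.gcd_dvd_left _ _)

lemma mediantScale_mul_crossDet_mediant_left :
    (mediantScale p q : ℤ) * crossDet p (mediant p q) = crossDet p q := by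
  have hden : (mediantScale p q : ℤ) * (mediant p q).den = p.den + q.den := by
    exact_mod_cast mediantScale_mul_den p q
  unfold crossDet
  linear_combination (p.den : ℤ) * mediantScale_mul_num p q - p.num * hden

lemma mediantScale_mul_crossDet_mediant_right :
    (mediantScale p q : ℤ) * crossDet (mediant p q) q = crossDet p q := by
  have hden : (mediantScale p q : ℤ) * (mediant p q).den = p.den + q.den := by
    exact_mod_cast mediantScale_mul_den p q
  unfold crossDet
  linear_combination q.num * hden - (q.den : ℤ) * mediantScale_mul_num p q

lemma mediantScale_eq_one_of_crossDet_eq_one (h : crossDet p q = 1) : mediantScale p q = 1 := by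
  have := mediantScale_mul_crossDet_mediant_left p q
  rw [h] at this
  exact_mod_cast Int.eq_one_of_mul_eq_one_right (by positivity) this

lemma num_mediant_of_mediantScale_eq_one (h : mediantScale p q = 1) :
    (mediant p q).num = p.num + q.num := by
  simpa [h] using mediantScale_mul_num p q

lemma den_mediant_of_mediantScale_eq_one (h : mediantScale p q = 1) :
    (mediant p q).den = p.den + q.den := by
  simpa [h] using mediantScale_mul_den p q

lemma den_add_den_le_of_crossDet_eq_one {p q x : ℚ} (h : crossDet p q = 1) (hpx : p < x)
    (hxq : x < q) : p.den + q.den ≤ x.den := by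
  rw [Rat.lt_iff] at hpx hxq
  unfold crossDet at h
  have key : (x.den : ℤ) = p.den * (q.num * x.den - x.num * q.den) +
      q.den * (x.num * p.den - p.num * x.den) := by
    linear_combination (-(x.den : ℤ)) * h
  have : (p.den : ℤ) + q.den ≤ x.den := by nlinarith
  exact_mod_cast this

end Mediant

section Residues

variable (p q : ℚ)

lemma dvd_mediantScale_iff (ℓ : ℕ) :
    ℓ ∣ mediantScale p q ↔ (p.num : ZMod ℓ) + q.num = 0 ∧ (p.den : ZMod ℓ) + q.den = 0 := by
  rw [mediantScale, Nat.dvd_gcd_iff, ← Int.natCast_dvd, ← ZMod.natCast_eq_zero_iff,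
    ← ZMod.intCast_zmod_eq_zero_iff_dvd, and_comm]
  push_cast
  rfl

lemma dvd_crossDet_iff (ℓ : ℕ) :
    (ℓ : ℤ) ∣ crossDet p q ↔ (p.den : ZMod ℓ) * q.num - p.num * q.den = 0 := by
  rw [← ZMod.intCast_zmod_eq_zero_iff_dvd, crossDet]
  push_cast
  rfl

lemma not_num_eq_zero_and_den_eq_zero {ℓ : ℕ} (hℓ : ℓ ≠ 1) :
    ¬((p.num : ZMod ℓ) = 0 ∧ (p.den : ZMod ℓ) = 0) := by
  rintro ⟨hnum, hden⟩
  rw [ZMod.intCast_zmod_eq_zero_iff_dvd, Int.natCast_dvd] at hnum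
  rw [ZMod.natCast_eq_zero_iff] at hden
  exact hℓ (Nat.eq_one_of_dvd_one (p.reduced ▸ Nat.dvd_gcd hnum hden))

-- Over `ZMod 2` the two nonzero vectors `(num, den)` with vanishing determinant coincide.
lemma two_dvd_mediantScale (h : 2 ∣ crossDet p q) : 2 ∣ mediantScale p q := by
  have key : ∀ a b c d : ZMod 2, ¬(a = 0 ∧ b = 0) → ¬(c = 0 ∧ d = 0) → b * c - a * d = 0 →
      a + c = 0 ∧ b + d = 0 := by decide
  rw [dvd_mediantScale_iff]
  exact key _ _ _ _ (not_num_eq_zero_and_den_eq_zero p (by norm_num))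
    (not_num_eq_zero_and_den_eq_zero q (by norm_num)) ((dvd_crossDet_iff p q 2).1 h)

-- Over `ZMod 3`, proportional nonzero vectors `u`, `v` with `u + v ≠ 0` are equal,
-- so `2u + v = u + 2v = 0`.
lemma three_dvd_mediantScale_mediant (h3 : 3 ∣ crossDet p q) (h1 : mediantScale p q = 1) :
    3 ∣ mediantScale p (mediant p q) ∧ 3 ∣ mediantScale (mediant p q) q := by
  have key : ∀ a b c d : ZMod 3, ¬(a = 0 ∧ b = 0) → ¬(c = 0 ∧ d = 0) → b * c - a * d = 0 →
      ¬(a + c = 0 ∧ b + d = 0) →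
      (a + (a + c) = 0 ∧ b + (b + d) = 0) ∧ ((a + c) + c = 0 ∧ (b + d) + d = 0) := by decide
  have hsum : ¬((p.num : ZMod 3) + q.num = 0 ∧ (p.den : ZMod 3) + q.den = 0) := by
    rw [← dvd_mediantScale_iff, h1]
    norm_num
  rw [dvd_mediantScale_iff, dvd_mediantScale_iff, num_mediant_of_mediantScale_eq_one p q h1,
    den_mediant_of_mediantScale_eq_one p q h1]
  push_cast
  exact key _ _ _ _ (not_num_eq_zero_and_den_eq_zero p (by norm_num))
    (not_num_eq_zero_and_den_eq_zero q (by norm_num)) ((dvd_crossDet_iff p q 3).1 h3) hsum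

end Residues

lemma two_dvd_or_three_dvd_of_dvd_two_pow_mul_three_pow {D : ℤ} {m k : ℕ} (hD : 1 < D)
    (h : D ∣ 2 ^ m * 3 ^ k) : 2 ∣ D ∨ 3 ∣ D := by
  obtain ⟨ℓ, hℓ, hℓD⟩ := Int.exists_prime_and_dvd (n := D) (by omega)
  rcases hℓ.dvd_or_dvd (hℓD.trans h) with h2 | h3
  · exact .inl
      ((hℓ.associated_of_dvd Int.prime_two (hℓ.dvd_of_dvd_pow h2)).dvd_iff_dvd_left.1 hℓD)
  · exact .inr
      ((hℓ.associated_of_dvd Int.prime_three (hℓ.dvd_of_dvd_pow h3)).dvd_iff_dvd_left.1 hℓD)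

def potential (p q : ℚ) : ℤ := 2 * crossDet p q + if mediantScale p q = 1 then 1 else 0

lemma potential_le_of_mediantScale_mul_crossDet {p q u v : ℚ} (hpos : 0 < crossDet p q)
    (hdet : (mediantScale p q : ℤ) * crossDet u v = crossDet p q)
    (hscale : mediantScale p q = 1 → crossDet p q ≠ 1 → mediantScale u v ≠ 1) :
    potential u v ≤ max 3 (potential p q - 1) := by
  have ht := mediantScale_pos p q
  have hpos' : 0 < crossDet u v := pos_of_mul_pos_right (hdet ▸ hpos) (by positivity)
  unfold potential
  by_cases h1 : mediantScale p q = 1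
  · rw [h1, Nat.cast_one, one_mul] at hdet
    rw [if_pos h1]
    by_cases hD : crossDet p q = 1
    · split_ifs <;> omega
    · rw [if_neg (hscale h1 hD)]
      omega
  · have h2 : (2 : ℤ) ≤ mediantScale p q := by norm_cast; omega
    have : 2 * crossDet u v ≤ crossDet p q := hdet ▸ by nlinarith
    rw [if_neg h1]
    split_ifs <;> omega

def SmoothPairWithin (m k B : ℕ) (p q : ℚ) : Prop :=
  0 < crossDet p q ∧ crossDet p q ∣ 2 ^ m * 3 ^ k ∧ potential p q ≤ B + 3

lemma smoothPairWithin_mediant {m k B : ℕ} {p q : ℚ} (h : SmoothPairWithin m k B p q) :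
    SmoothPairWithin m k (B - 1) p (mediant p q) ∧
      SmoothPairWithin m k (B - 1) (mediant p q) q := by
  obtain ⟨hpos, hdvd, hpot⟩ := h
  have hchildren (h1 : mediantScale p q = 1) (hD : crossDet p q ≠ 1) :
      3 ∣ mediantScale p (mediant p q) ∧ 3 ∣ mediantScale (mediant p q) q := by
    refine three_dvd_mediantScale_mediant p q ?_ h1
    refine (two_dvd_or_three_dvd_of_dvd_two_pow_mul_three_pow (by omega) hdvd).resolve_left
      fun h2 => ?_
    simpa [h1] using two_dvd_mediantScale p q h2
  have hchild {u v : ℚ} (hdet : (mediantScale p q : ℤ) * crossDet u v = crossDet p q)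
      (hscale : mediantScale p q = 1 → crossDet p q ≠ 1 → mediantScale u v ≠ 1) :
      SmoothPairWithin m k (B - 1) u v := by
    have := potential_le_of_mediantScale_mul_crossDet hpos hdet hscale
    refine ⟨pos_of_mul_pos_right (hdet ▸ hpos) (by positivity),
      (Dvd.intro_left _ hdet).trans hdvd, by omega⟩
  refine ⟨hchild (mediantScale_mul_crossDet_mediant_left p q) fun h1 hD => ?_,
    hchild (mediantScale_mul_crossDet_mediant_right p q) fun h1 hD => ?_⟩
  · have := (hchildren h1 hD).1; omega
  · have := (hchildren h1 hD).2; omega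

lemma SmoothPairWithin.crossDet_eq_one {m k : ℕ} {p q : ℚ} (h : SmoothPairWithin m k 0 p q) :
    crossDet p q = 1 := by
  obtain ⟨hpos, -, hpot⟩ := h
  unfold potential at hpot
  split_ifs at hpot <;> omega

lemma insertMediants_cons (v : ℚ) (l : List ℚ) :
    insertMediants (v :: l) = v :: (insertMediants (v :: l)).tail := by
  cases l <;> rfl

lemma isChain_insertMediants {R R' : ℚ → ℚ → Prop}
    (h : ∀ p q, R p q → R' p (mediant p q) ∧ R' (mediant p q) q) :
    ∀ {l : List ℚ}, List.IsChain R l → List.IsChain R' (insertMediants l)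
  | [], _ => .nil
  | [_], _ => .singleton _
  | p :: q :: l, hl => by
    rw [List.isChain_cons_cons] at hl
    have htail := isChain_insertMediants h hl.2
    rw [insertMediants, insertMediants_cons] at *
    exact .cons_cons (h p q hl.1).1 (.cons_cons (h p q hl.1).2 htail)

lemma infix_insertMediants {u v : ℚ} :
    ∀ {l : List ℚ}, [u, v] <:+: l → [u, mediant u v, v] <:+: insertMediants l
  | [], h | [_], h => absurd h.length_le (by simp)
  | p :: q :: l, h => by
    rcases List.infix_cons_iff.1 h with h | h
    · obtain ⟨rfl, rfl⟩ : u = p ∧ v = q := by simpa using h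
      rw [insertMediants, insertMediants_cons]
      exact (List.prefix_append [u, mediant u v, v] _).isInfix
    · exact (infix_insertMediants h).trans ((List.suffix_cons _ _).isInfix.trans
        (List.suffix_cons _ _).isInfix)

lemma isChain_S {R : ℕ → ℚ → ℚ → Prop}
    (h : ∀ B p q, R B p q → R (B - 1) p (mediant p q) ∧ R (B - 1) (mediant p q) q)
    {r s : ℚ} {B : ℕ} (h0 : R B r s) : ∀ n, List.IsChain (R (B - n)) (S r s n)
  | 0 => List.isChain_pair.2 h0
  | n + 1 => by
    rw [← Nat.sub_sub]
    exact isChain_insertMediants (h _) (isChain_S h h0 n)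

lemma exists_infix_S_between {r s x : ℚ} (hrx : r ≤ x) (hxs : x ≤ s) {L : ℕ}
    (hL : ∀ n, L ≤ n → List.IsChain (fun u v => crossDet u v = 1) (S r s n)) :
    ∀ n, ∃ u v, [u, v] <:+: S r s n ∧ u ≤ x ∧ x ≤ v ∧ n - L ≤ u.den + v.den
  | 0 => ⟨r, s, List.infix_refl _, hrx, hxs, by omega⟩
  | n + 1 => by
    obtain ⟨u, v, huv, hux, hxv, hden⟩ := exists_infix_S_between hrx hxs hL n
    have hinfix := infix_insertMediants huv
    have hgrow : n + 1 - L ≤ u.den + (mediant u v).den ∧ n + 1 - L ≤ (mediant u v).den + v.den := by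
      have := u.pos; have := v.pos; have := (mediant u v).pos
      rcases le_or_gt L n with hn | hn
      · have hdet : crossDet u v = 1 := by simpa using (hL n hn).infix huv
        have := den_mediant_of_mediantScale_eq_one u v
          (mediantScale_eq_one_of_crossDet_eq_one u v hdet)
        omega
      · omega
    rcases le_total x (mediant u v) with hxw | hwx
    · exact ⟨u, mediant u v, (List.prefix_append [u, mediant u v] [v]).isInfix.trans hinfix,
        hux, hxw, hgrow.1⟩
    · exact ⟨mediant u v, v, (List.suffix_append [u] [mediant u v, v]).isInfix.trans hinfix,
        hwx, hxv, hgrow.2⟩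

lemma exists_mem_S_of_isChain_crossDet_eq_one {r s x : ℚ} (hrx : r ≤ x) (hxs : x ≤ s) {L : ℕ}
    (hL : ∀ n, L ≤ n → List.IsChain (fun u v => crossDet u v = 1) (S r s n)) :
    ∃ n, x ∈ S r s n := by
  obtain ⟨u, v, huv, hux, hxv, hden⟩ := exists_infix_S_between hrx hxs hL (L + x.den + 1)
  refine ⟨L + x.den + 1, ?_⟩
  rcases hux.lt_or_eq with hux | rfl
  · rcases hxv.lt_or_eq with hxv | rfl
    · have hdet : crossDet u v = 1 := by simpa using (hL _ (by omega)).infix huv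
      have := den_add_den_le_of_crossDet_eq_one hdet hux hxv
      omega
    · exact huv.subset (by simp)
  · exact huv.subset (by simp)

lemma num_den_natCast_div_of_coprime {a b : ℕ} (hb : 0 < b) (hab : a.gcd b = 1) :
    ((a : ℚ) / b).num = a ∧ ((a : ℚ) / b).den = b := by
  have hc : (a : ℤ).natAbs.Coprime (b : ℤ).natAbs := by simpa using hab
  have hnum := Rat.num_div_eq_of_coprime (by exact_mod_cast hb) hc
  have hden := Rat.den_div_eq_of_coprime (by exact_mod_cast hb) hc
  push_cast at hnum hden
  exact ⟨hnum, by exact_mod_cast hden⟩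

/-- If `a/b` and `c/d` are nonnegative fractions in lowest terms whose cross-determinant
`bc - ad` has the form `2 ^ m * 3 ^ k`, then (i) every rational `x` with `a/b ≤ x ≤ c/d`
appears in the tree `T(a/b, c/d)`, and (ii) from some row `L` on, every pair of
consecutive entries has cross-determinant `1`. -/
theorem appears_of_crossDeterminant_two_three_smooth (a b c d : ℕ) (hb : 0 < b) (hd : 0 < d)
    (hab : Nat.gcd a b = 1) (hcd : Nat.gcd c d = 1)
    (m k : ℕ) (hdet : (b : ℤ) * c - a * d = 2 ^ m * 3 ^ k) :
    (∀ x : ℚ, (a : ℚ) / b ≤ x → x ≤ (c : ℚ) / d →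
      ∃ n, x ∈ S ((a : ℚ) / b) ((c : ℚ) / d) n) ∧
    (∃ L, ∀ n, L ≤ n → ∀ j, (hj : j + 1 < (S ((a : ℚ) / b) ((c : ℚ) / d) n).length) →
      ((S ((a : ℚ) / b) ((c : ℚ) / d) n)[j].den : ℤ) *
          (S ((a : ℚ) / b) ((c : ℚ) / d) n)[j + 1].num -
        (S ((a : ℚ) / b) ((c : ℚ) / d) n)[j].num *
          ((S ((a : ℚ) / b) ((c : ℚ) / d) n)[j + 1].den : ℤ) = 1) := by
  obtain ⟨hr_num, hr_den⟩ := num_den_natCast_div_of_coprime hb hab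
  obtain ⟨hs_num, hs_den⟩ := num_den_natCast_div_of_coprime hd hcd
  have hdet₀ : crossDet ((a : ℚ) / b) ((c : ℚ) / d) = 2 ^ m * 3 ^ k := by
    rw [crossDet, hr_num, hr_den, hs_num, hs_den, hdet]
  have h₀ : SmoothPairWithin m k (2 * (2 ^ m * 3 ^ k)) ((a : ℚ) / b) ((c : ℚ) / d) := by
    refine ⟨by rw [hdet₀]; positivity, by rw [hdet₀], ?_⟩
    unfold potential
    rw [hdet₀]
    push_cast
    split_ifs <;> omega
  have hunimod (n : ℕ) (hn : 2 * (2 ^ m * 3 ^ k) ≤ n) :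
      List.IsChain (fun u v => crossDet u v = 1) (S ((a : ℚ) / b) ((c : ℚ) / d) n) := by
    have hrow :=
      isChain_S (R := SmoothPairWithin m k) (fun _ _ _ => smoothPairWithin_mediant) h₀ n
    rw [Nat.sub_eq_zero_of_le hn] at hrow
    exact hrow.imp fun _ _ => SmoothPairWithin.crossDet_eq_one
  exact ⟨fun x hrx hxs => exists_mem_S_of_isChain_crossDet_eq_one hrx hxs hunimod,
    2 * (2 ^ m * 3 ^ k), fun n hn => List.isChain_iff_getElem.1 (hunimod n hn)⟩
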